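/- arXiv:1910.10944 — 3 statements merged into one kernel-verified Lean document; each statement's English description precedes it below -/
import Mathlib

section
/- For every finite instance set X, finite hypothesis class H of functions X → Bool, and initial hypothesis h0 ∈ H, every collusion-free preference function σ of the form σ(h'; H', h) = g(h', H') satisfies TD_{X,H,h0}(σ) ≥ NCTD(H); consequently Σ_gvs-TD_{X,H,h0} ≥ NCTD(H). -/
open scoped Classical

/-- A preference function `σ(h'; H', h)`: `h'` is a candidate hypothesis, `H'` the current
version space, `h` the learner's current hypothesis. -/
abbrev Pref (X : Type) : Type := (X → Bool) → Finset (X → Bool) → (X → Bool) → ℝ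

variable {X : Type}

/-- `h` is consistent with the labeled examples in `S`. -/
def ConsistentWith (h : X → Bool) (S : Finset (X × Bool)) : Prop := ∀ z ∈ S, h z.1 = z.2

/-- Version space of `H'` induced by the labeled examples `S`. -/
noncomputable def verSpace (H' : Finset (X → Bool)) (S : Finset (X × Bool)) :
    Finset (X → Bool) :=
  H'.filter fun h => ∀ z ∈ S, h z.1 = z.2

/-- The set of hypotheses in `H'` most preferred by `σ` given current hypothesis `h`. -/
noncomputable def argminSet (σ : Pref X) (H' : Finset (X → Bool)) (h : X → Bool) :
    Finset (X → Bool) :=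
  H'.filter fun h' => ∀ h'' ∈ H', σ h' H' h ≤ σ h'' H' h

/-- `C_σ(H', h, z)`: the candidate hypotheses most preferred by the learner after
receiving the labeled example `z`. -/
noncomputable def Cand (σ : Pref X) (H' : Finset (X → Bool)) (h : X → Bool) (z : X × Bool) :
    Finset (X → Bool) :=
  argminSet σ (verSpace H' {z}) h

/-- `Dle σ n H' h h*` means the worst-case teaching cost `D_σ(H', h, h*) ≤ n`. -/
def Dle (σ : Pref X) : ℕ → Finset (X → Bool) → (X → Bool) → (X → Bool) → Prop
  | 0, _, _, _ => False
  | n + 1, H', h, hstar =>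
      (∃ z : X × Bool, hstar z.1 = z.2 ∧ Cand σ H' h z = {hstar}) ∨
      (∃ z : X × Bool, hstar z.1 = z.2 ∧
        ∀ h'' ∈ Cand σ H' h z, Dle σ n (verSpace H' {z}) h'' hstar)

/-- The worst-case teaching cost `D_σ(H', h, h*)` (∞ when teaching is impossible). -/
noncomputable def Dval (σ : Pref X) (H' : Finset (X → Bool)) (h hstar : X → Bool) : ℕ∞ :=
  sInf {n : ℕ∞ | ∃ m : ℕ, n = (m : ℕ∞) ∧ Dle σ m H' h hstar}

/-- Teaching dimension `TD_{X,H,h0}(σ) = max_{h* ∈ H} D_σ(H, h0, h*)`. -/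
noncomputable def TDpref (Hc : Finset (X → Bool)) (h0 : X → Bool) (σ : Pref X) : ℕ∞ :=
  ⨆ hstar ∈ Hc, Dval σ Hc h0 hstar

/-- Teaching dimension of a family of preference functions: `Σ-TD = min_{σ ∈ Σ} TD(σ)`. -/
noncomputable def famTD (Hc : Finset (X → Bool)) (h0 : X → Bool) (F : Set (Pref X)) : ℕ∞ :=
  ⨅ σ ∈ F, TDpref Hc h0 σ

/-- A preference function is collusion-free. -/
def CollusionFree (Hc : Finset (X → Bool)) (σ : Pref X) : Prop :=
  ∀ h ∈ Hc, ∀ H' ⊆ Hc, ∀ hhat : X → Bool,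
    argminSet σ H' h = {hhat} →
    ∀ S : Finset (X × Bool), ConsistentWith hhat S →
      argminSet σ (verSpace H' S) hhat = {hhat}

/-- `Σ_const`: collusion-free constant preference functions. -/
def SigmaConst (Hc : Finset (X → Bool)) : Set (Pref X) :=
  {σ | CollusionFree Hc σ ∧ ∃ c : ℝ, ∀ h' H' h, σ h' H' h = c}

/-- `Σ_global`: collusion-free preference functions of the form `g(h')`. -/
def SigmaGlobal (Hc : Finset (X → Bool)) : Set (Pref X) :=
  {σ | CollusionFree Hc σ ∧ ∃ g : (X → Bool) → ℝ, ∀ h' H' h, σ h' H' h = g h'}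

/-- `Σ_gvs`: collusion-free preference functions of the form `g(h', H')`. -/
def SigmaGVS (Hc : Finset (X → Bool)) : Set (Pref X) :=
  {σ | CollusionFree Hc σ ∧
    ∃ g : (X → Bool) → Finset (X → Bool) → ℝ, ∀ h' H' h, σ h' H' h = g h' H'}

/-- `Σ_local`: collusion-free preference functions of the form `g(h', h)`. -/
def SigmaLocal (Hc : Finset (X → Bool)) : Set (Pref X) :=
  {σ | CollusionFree Hc σ ∧ ∃ g : (X → Bool) → (X → Bool) → ℝ, ∀ h' H' h, σ h' H' h = g h' h}

/-- `Σ_lvs`: all collusion-free preference functions. -/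
def SigmaLVS (Hc : Finset (X → Bool)) : Set (Pref X) := {σ | CollusionFree Hc σ}

/-- `T` is a teaching set for `h` w.r.t. the subclass `Hc`. -/
def IsTeachingSet (Hc : Finset (X → Bool)) (h : X → Bool) (T : Finset X) : Prop :=
  ∀ h' ∈ Hc, (∀ x ∈ T, h' x = h x) → h' = h

/-- Size of the minimum teaching set of `h` w.r.t. `Hc`. -/
noncomputable def minTSsize (Hc : Finset (X → Bool)) (h : X → Bool) : ℕ :=
  sInf {k | ∃ T : Finset X, T.card = k ∧ IsTeachingSet Hc h T}

/-- The classical (worst-case) teaching dimension `TD(H)`. -/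
noncomputable def TDclassic (Hc : Finset (X → Bool)) : ℕ :=
  Hc.sup (minTSsize Hc)

/-- Witness for `RTD(H) ≤ k`: an ordering of `H` where each hypothesis has a teaching
set of size at most `k` w.r.t. the remaining hypotheses. -/
def RTDwitness (Hc : Finset (X → Bool)) (k : ℕ) : Prop :=
  ∃ L : List (X → Bool), L.Nodup ∧ L.toFinset = Hc ∧
    ∀ (i : ℕ) (hi : i < L.length), ∃ T : Finset X, T.card ≤ k ∧
      IsTeachingSet (L.drop i).toFinset (L.get ⟨i, hi⟩) T

/-- The recursive teaching dimension `RTD(H)`. -/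
noncomputable def RTD (Hc : Finset (X → Bool)) : ℕ := sInf {k | RTDwitness Hc k}

/-- A teacher mapping is non-clashing on `Hc`. -/
def NonClashing (Hc : Finset (X → Bool)) (T : (X → Bool) → Finset X) : Prop :=
  ∀ h ∈ Hc, ∀ h' ∈ Hc, h ≠ h' →
    ¬ ((∀ x ∈ T h, h' x = h x) ∧ (∀ x ∈ T h', h x = h' x))

/-- The non-clashing teaching dimension `NCTD(H)`. -/
noncomputable def NCTD (Hc : Finset (X → Bool)) : ℕ :=
  sInf {k | ∃ T : (X → Bool) → Finset X, NonClashing Hc T ∧ ∀ h ∈ Hc, (T h).card ≤ k}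

/-- `Hc` shatters the set of instances `X'`. -/
def Shatters (Hc : Finset (X → Bool)) (X' : Finset X) : Prop :=
  ∀ b : X → Bool, ∃ h ∈ Hc, ∀ x ∈ X', h x = b x

/-- The VC dimension `VCD(H, X)`. -/
noncomputable def VCD (Hc : Finset (X → Bool)) : ℕ :=
  sSup {k | ∃ X' : Finset X, X'.card = k ∧ Shatters Hc X'}

/-!
A preference function `σ(h'; H', h) = g(h', H')` ignores the learner's current hypothesis, so
every teaching strategy for `h*` of cost at most `n` collapses to a single set `S` of at most `n`
examples with `argmin_{H(S)} σ = {h*}`: only the accumulated version space matters. Let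
`T(h*)` be the instances of that set. If `h` and `h'` clashed under `T`, then `h` would be
consistent with `S_{h'}` and `h'` with `S_h`; collusion-freeness, applied once from `H(S_h)`
and once from `H(S_{h'})`, gives `argmin_{H(S_h ∪ S_{h'})} σ = {h} = {h'}`. Hence `T` is
non-clashing and `NCTD(H) ≤ n`.
-/

def IgnoresCurrent (σ : Pref X) : Prop :=
  ∀ h' H' h₁ h₂, σ h' H' h₁ = σ h' H' h₂

section

variable {σ : Pref X}

lemma verSpace_verSpace (H' : Finset (X → Bool)) (A B : Finset (X × Bool)) :
    verSpace (verSpace H' A) B = verSpace H' (A ∪ B) := by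
  ext f
  simp only [verSpace, Finset.mem_filter, Finset.mem_union, or_imp, forall_and, and_assoc]

lemma consistentWith_singleton {h : X → Bool} {z : X × Bool} :
    ConsistentWith h {z} ↔ h z.1 = z.2 := by simp [ConsistentWith]

lemma consistentWith_insert {h : X → Bool} {z : X × Bool} {S : Finset (X × Bool)} :
    ConsistentWith h (insert z S) ↔ h z.1 = z.2 ∧ ConsistentWith h S :=
  Finset.forall_mem_insert _ _ _

lemma mem_verSpace_of_consistentWith {H' : Finset (X → Bool)} {S : Finset (X × Bool)}
    {h : X → Bool} (hH : h ∈ H') (hS : ConsistentWith h S) : h ∈ verSpace H' S :=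
  Finset.mem_filter.mpr ⟨hH, hS⟩

lemma ConsistentWith.of_eqOn_fst {h h' : X → Bool} {S : Finset (X × Bool)}
    (hS : ConsistentWith h S) (heq : ∀ x ∈ S.image Prod.fst, h' x = h x) :
    ConsistentWith h' S := fun z hz =>
  (heq z.1 (Finset.mem_image_of_mem _ hz)).trans (hS z hz)

lemma IgnoresCurrent.argminSet_eq (hσ : IgnoresCurrent σ) (V : Finset (X → Bool))
    (h₁ h₂ : X → Bool) : argminSet σ V h₁ = argminSet σ V h₂ := by
  simp only [argminSet, hσ _ V h₁ h₂]

lemma argminSet_nonempty (V : Finset (X → Bool)) (h : X → Bool) (hV : V.Nonempty) :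
    (argminSet σ V h).Nonempty := by
  obtain ⟨a, ha, hmin⟩ := V.exists_min_image (fun h' => σ h' V h) hV
  exact ⟨a, Finset.mem_filter.mpr ⟨ha, hmin⟩⟩

lemma exists_dle_eq_dval {H' : Finset (X → Bool)} {h hstar : X → Bool}
    (hfin : Dval σ H' h hstar ≠ ⊤) : ∃ m : ℕ, Dval σ H' h hstar = m ∧ Dle σ m H' h hstar := by
  have hne : {n : ℕ∞ | ∃ m : ℕ, n = m ∧ Dle σ m H' h hstar}.Nonempty := by
    by_contra hempty
    exact hfin (by rw [Dval, Set.not_nonempty_iff_eq_empty.mp hempty, sInf_empty])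
  obtain ⟨m, hm, hD⟩ := csInf_mem hne
  exact ⟨m, hm, hD⟩

lemma IgnoresCurrent.exists_of_dle (hσ : IgnoresCurrent σ) :
    ∀ (m : ℕ) (H' : Finset (X → Bool)) (h hstar : X → Bool), hstar ∈ H' →
      Dle σ m H' h hstar →
      ∃ S : Finset (X × Bool), S.card ≤ m ∧ ConsistentWith hstar S ∧
        argminSet σ (verSpace H' S) h = {hstar}
  | 0, _, _, _, _, hD => hD.elim
  | m + 1, H', h, hstar, hmem, hD => by
    rcases hD with ⟨z, hz, hC⟩ | ⟨z, hz, hnext⟩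
    · exact ⟨{z}, by simp, consistentWith_singleton.mpr hz, hC⟩
    · have hmemz : hstar ∈ verSpace H' {z} :=
        mem_verSpace_of_consistentWith hmem (consistentWith_singleton.mpr hz)
      obtain ⟨h'', hh''⟩ := argminSet_nonempty (σ := σ) _ h ⟨hstar, hmemz⟩
      obtain ⟨S, hcard, hcons, harg⟩ :=
        hσ.exists_of_dle m _ h'' hstar hmemz (hnext h'' hh'')
      refine ⟨insert z S, (Finset.card_insert_le z S).trans (by omega),
        consistentWith_insert.mpr ⟨hz, hcons⟩, ?_⟩
      rw [Finset.insert_eq, ← verSpace_verSpace, hσ.argminSet_eq _ h h'', harg]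

variable {Hc : Finset (X → Bool)} {h0 : X → Bool}

lemma CollusionFree.eq_of_consistentWith (hcf : CollusionFree Hc σ) (hσ : IgnoresCurrent σ)
    (h0mem : h0 ∈ Hc) {h h' : X → Bool} {S S' : Finset (X × Bool)}
    (hS : argminSet σ (verSpace Hc S) h0 = {h}) (hS' : argminSet σ (verSpace Hc S') h0 = {h'})
    (hcons : ConsistentWith h S') (hcons' : ConsistentWith h' S) : h = h' := by
  have e : argminSet σ (verSpace Hc (S ∪ S')) h = {h} := by
    rw [← verSpace_verSpace]
    exact hcf h0 h0mem _ (Finset.filter_subset _ _) h hS S' hcons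
  have e' : argminSet σ (verSpace Hc (S ∪ S')) h' = {h'} := by
    rw [Finset.union_comm, ← verSpace_verSpace]
    exact hcf h0 h0mem _ (Finset.filter_subset _ _) h' hS' S hcons'
  rw [hσ.argminSet_eq _ h h', e'] at e
  exact (Finset.singleton_injective e).symm

lemma CollusionFree.nonClashing (hcf : CollusionFree Hc σ) (hσ : IgnoresCurrent σ)
    (h0mem : h0 ∈ Hc) {S : (X → Bool) → Finset (X × Bool)}
    (hS : ∀ h ∈ Hc, ConsistentWith h (S h) ∧ argminSet σ (verSpace Hc (S h)) h0 = {h}) :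
    NonClashing Hc fun h => (S h).image Prod.fst := by
  rintro h hh h' hh' hne ⟨hagree, hagree'⟩
  exact hne <| hcf.eq_of_consistentWith hσ h0mem (hS h hh).2 (hS h' hh').2
    ((hS h' hh').1.of_eqOn_fst hagree') ((hS h hh).1.of_eqOn_fst hagree)

lemma CollusionFree.NCTD_le_TDpref (hcf : CollusionFree Hc σ) (hσ : IgnoresCurrent σ)
    (h0mem : h0 ∈ Hc) : (NCTD Hc : ℕ∞) ≤ TDpref Hc h0 σ := by
  cases hTD : TDpref Hc h0 σ with
  | top => exact le_top
  | coe n =>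
    have hteach : ∀ hstar ∈ Hc, ∃ S : Finset (X × Bool), S.card ≤ n ∧
        ConsistentWith hstar S ∧ argminSet σ (verSpace Hc S) h0 = {hstar} := by
      intro hstar hmem
      have hle : Dval σ Hc h0 hstar ≤ n := hTD ▸ le_biSup (Dval σ Hc h0) hmem
      obtain ⟨m, hm, hD⟩ := exists_dle_eq_dval (ne_top_of_le_ne_top (ENat.natCast_ne_top n) hle)
      obtain ⟨S, hcard, hS⟩ := hσ.exists_of_dle m Hc h0 hstar hmem hD
      exact ⟨S, hcard.trans (by exact_mod_cast hm ▸ hle), hS⟩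
    choose! S hcard hS using hteach
    have hNCTD : NCTD Hc ≤ n := Nat.sInf_le ⟨_, hcf.nonClashing hσ h0mem hS,
      fun h hh => Finset.card_image_le.trans (hcard h hh)⟩
    exact_mod_cast hNCTD

end

theorem sigmaGVS_TD_ge_NCTD_general (X : Type) (Hc : Finset (X → Bool))
    (h0 : X → Bool) (h0mem : h0 ∈ Hc) :
    (∀ σ ∈ SigmaGVS Hc, (NCTD Hc : ℕ∞) ≤ TDpref Hc h0 σ) ∧
    (NCTD Hc : ℕ∞) ≤ famTD Hc h0 (SigmaGVS Hc) := by
  have main : ∀ σ ∈ SigmaGVS Hc, (NCTD Hc : ℕ∞) ≤ TDpref Hc h0 σ := by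
    rintro σ ⟨hcf, g, hg⟩
    exact hcf.NCTD_le_TDpref (fun h' H' h₁ h₂ => by rw [hg, hg]) h0mem
  exact ⟨main, le_iInf₂ main⟩

/-- every `σ ∈ Σ_gvs` satisfies `TD(σ) ≥ NCTD(H)`; consequently
`Σ_gvs-TD ≥ NCTD(H)`. -/
theorem sigmaGVS_TD_ge_NCTD (X : Type) [Fintype X] (Hc : Finset (X → Bool))
    (h0 : X → Bool) (h0mem : h0 ∈ Hc) :
    (∀ σ ∈ SigmaGVS Hc, (NCTD Hc : ℕ∞) ≤ TDpref Hc h0 σ) ∧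
    (NCTD Hc : ℕ∞) ≤ famTD Hc h0 (SigmaGVS Hc) :=
  sigmaGVS_TD_ge_NCTD_general X Hc h0 h0mem
end

section
/- For the Warmuth hypothesis class CW (over the 5-element instance set X = {x1,…,x5}, consisting of the 10 hypotheses given by all five cyclic shifts of the label vector (1,1,0,0,0) and all five cyclic shifts of (1,0,1,0,0)), there exist an initial hypothesis h0 ∈ CW and a collusion-free preference function σ_lvs such that TD_{X,CW,h0}(σ_lvs) = 1; in particular, Σ_lvs-TD for the Warmuth class equals 1, which is strictly smaller than NCTD(CW) = 2. -/
open scoped Classical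

variable {X : Type}

/-- The label vector `(1,1,0,0,0)`. -/
def wBase1 : Fin 5 → Bool := fun x => decide (x.val = 0 ∨ x.val = 1)

/-- The label vector `(1,0,1,0,0)`. -/
def wBase2 : Fin 5 → Bool := fun x => decide (x.val = 0 ∨ x.val = 2)

/-- The Warmuth hypothesis class: all five cyclic shifts of `(1,1,0,0,0)` and all five
cyclic shifts of `(1,0,1,0,0)`. -/
noncomputable def warmuthClass : Finset (Fin 5 → Bool) :=
  (Finset.univ.image fun s : Fin 5 => fun x : Fin 5 => wBase1 (x - s)) ∪
  (Finset.univ.image fun s : Fin 5 => fun x : Fin 5 => wBase2 (x - s))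

/-!
The ten one-example version spaces `CW({(x, b)})` are pairwise distinct, and the decoding
`(x, 1) ↦ 1_{x, x+1}`, `(x, 0) ↦ 1_{x-1, x+1}` is a bijection from examples onto `CW` in which
every hypothesis is consistent with its example. A learner starting at `h0 = 1_{0, 1}` reads the
version space `CW({z})` as the codeword of the hypothesis decoded from `z`, so one example teaches
every target. Collusion-freeness only constrains the learner once it has singled out a
hypothesis: away from `h0` it never moves, and at `h0` it stays put on every version space
inside `CW({(0, 1)})`. This is consistent with the decoding because `CW({(0, 1)})` is
inclusion-minimal among the one-example version spaces containing `h0`.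

Every hypothesis of `CW` has exactly two positive points, so its positive set is a non-clashing
teaching set. A non-clashing teacher using at most one point per hypothesis would, by counting,
have to use each of the ten examples exactly once. If `p x` is taught by `(x, 1)` and `q a` by
`(a, 0)`, non-clashing forces `q a x = 1 → p x a = 1`; the five `q a` have ten positive points
in total, but the five `p x` have only five positive points off their own diagonal.
-/

open Finset

section Argmin

lemma argminSet_subset (σ : Pref X) (H' : Finset (X → Bool)) (h : X → Bool) :
    argminSet σ H' h ⊆ H' :=
  filter_subset _ _

noncomputable def indicatorPref
    (P : (X → Bool) → Finset (X → Bool) → (X → Bool) → Prop) : Pref X :=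
  fun h' H' h => if P h' H' h then 0 else 1

variable {P : (X → Bool) → Finset (X → Bool) → (X → Bool) → Prop}
  {H' : Finset (X → Bool)} {h a : X → Bool}

lemma argminSet_indicatorPref_of_exists (ha : a ∈ H') (hPa : P a H' h) :
    argminSet (indicatorPref P) H' h = H'.filter fun b => P b H' h := by
  ext b
  simp only [argminSet, mem_filter]
  refine and_congr_right fun _ => ⟨fun hmin => ?_, fun hPb c _ => ?_⟩
  · by_contra hPb
    have h10 := hmin a ha
    simp only [indicatorPref, hPb, hPa, if_true, if_false] at h10
    norm_num at h10
  · simp only [indicatorPref, hPb, if_true]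
    split_ifs <;> norm_num

lemma argminSet_indicatorPref_of_forall_not (hP : ∀ b ∈ H', ¬ P b H' h) :
    argminSet (indicatorPref P) H' h = H' := by
  ext b
  simp only [argminSet, mem_filter, and_iff_left_iff_imp]
  intro hb c hc
  simp [indicatorPref, hP b hb, hP c hc]

lemma argminSet_indicatorPref_eq_singleton (ha : a ∈ H') (hPa : P a H' h)
    (huniq : ∀ b ∈ H', P b H' h → b = a) : argminSet (indicatorPref P) H' h = {a} := by
  rw [argminSet_indicatorPref_of_exists ha hPa, eq_singleton_iff_unique_mem, mem_filter]
  exact ⟨⟨ha, hPa⟩, fun b hb => huniq b (mem_filter.1 hb).1 (mem_filter.1 hb).2⟩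

lemma pred_or_eq_singleton_of_argminSet_indicatorPref_eq
    (hargmin : argminSet (indicatorPref P) H' h = {a}) : P a H' h ∨ H' = {a} := by
  by_cases hex : ∃ b ∈ H', P b H' h
  · obtain ⟨b, hb, hPb⟩ := hex
    rw [argminSet_indicatorPref_of_exists hb hPb] at hargmin
    exact Or.inl (mem_filter.1 (hargmin.symm ▸ mem_singleton_self a : a ∈ _)).2
  · push Not at hex
    rw [argminSet_indicatorPref_of_forall_not hex] at hargmin
    exact Or.inr hargmin

end Argmin

section TeachingCost

variable {σ : Pref X} {Hc H' : Finset (X → Bool)} {h h0 hstar : X → Bool}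

lemma one_le_Dval (σ : Pref X) (H' : Finset (X → Bool)) (h hstar : X → Bool) :
    1 ≤ Dval σ H' h hstar := by
  refine le_sInf ?_
  rintro n ⟨m, rfl, hm⟩
  cases m with
  | zero => exact hm.elim
  | succ m => exact_mod_cast Nat.succ_pos m

lemma Dval_eq_one {z : X × Bool} (hz : hstar z.1 = z.2) (hC : Cand σ H' h z = {hstar}) :
    Dval σ H' h hstar = 1 :=
  le_antisymm (sInf_le ⟨1, Nat.cast_one.symm, Or.inl ⟨z, hz, hC⟩⟩) (one_le_Dval _ _ _ _)

lemma one_le_TDpref (σ : Pref X) (hne : Hc.Nonempty) : 1 ≤ TDpref Hc h0 σ :=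
  (one_le_Dval σ Hc h0 _).trans
    (le_iSup₂ (f := fun g (_ : g ∈ Hc) => Dval σ Hc h0 g) _ hne.choose_spec)

lemma TDpref_eq_one (hne : Hc.Nonempty)
    (hteach : ∀ g ∈ Hc, ∃ z : X × Bool, g z.1 = z.2 ∧ Cand σ Hc h0 z = {g}) :
    TDpref Hc h0 σ = 1 := by
  refine le_antisymm (iSup₂_le fun g hg => ?_) (one_le_TDpref σ hne)
  obtain ⟨z, hz, hC⟩ := hteach g hg
  exact (Dval_eq_one hz hC).le

lemma famTD_eq_one {F : Set (Pref X)} (hσ : σ ∈ F) (hTD : TDpref Hc h0 σ = 1)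
    (hne : Hc.Nonempty) : famTD Hc h0 F = 1 :=
  le_antisymm ((iInf₂_le σ hσ).trans hTD.le) (le_iInf₂ fun σ' _ => one_le_TDpref σ' hne)

end TeachingCost

lemma mem_verSpace {H' : Finset (X → Bool)} {S : Finset (X × Bool)} {h : X → Bool} :
    h ∈ verSpace H' S ↔ h ∈ H' ∧ ConsistentWith h S :=
  mem_filter

lemma mem_verSpace_singleton {H' : Finset (X → Bool)} {z : X × Bool} {h : X → Bool} :
    h ∈ verSpace H' {z} ↔ h ∈ H' ∧ h z.1 = z.2 := by
  simp [verSpace]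

lemma verSpace_subset (H' : Finset (X → Bool)) (S : Finset (X × Bool)) : verSpace H' S ⊆ H' :=
  filter_subset _ _

section Decoding

noncomputable def decodingPref (H : Finset (X → Bool)) (decode : X × Bool → X → Bool)
    (z₀ : X × Bool) : Pref X :=
  indicatorPref fun h' H' h =>
    if h = decode z₀ then
      -- `decode z₀` is chosen only through the second clause, which survives restriction
      (∃ z, H' = verSpace H {z} ∧ h' = decode z ∧ h' ≠ decode z₀) ∨
        (h' = decode z₀ ∧ H' ⊆ verSpace H {z₀})
    else h' = h

variable {H H' : Finset (X → Bool)} {decode : X × Bool → X → Bool} {z₀ : X × Bool}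

lemma argminSet_decodingPref_of_ne {h : X → Bool} (hh : h ≠ decode z₀) (hmem : h ∈ H') :
    argminSet (decodingPref H decode z₀) H' h = {h} :=
  argminSet_indicatorPref_eq_singleton hmem (by simp [hh]) fun _ _ hb => by simpa [hh] using hb

lemma subset_verSpace_of_argminSet_decodingPref_eq {h : X → Bool}
    (hcons : decode z₀ z₀.1 = z₀.2) (hz₀ : decode z₀ ∈ H)
    (hargmin : argminSet (decodingPref H decode z₀) H' h = {decode z₀}) :
    H' ⊆ verSpace H {z₀} := by
  rcases pred_or_eq_singleton_of_argminSet_indicatorPref_eq hargmin with hP | rfl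
  · by_cases hh : h = decode z₀
    · rw [if_pos hh] at hP
      rcases hP with ⟨_, _, _, hne⟩ | ⟨_, hsub⟩
      · exact absurd rfl hne
      · exact hsub
    · rw [if_neg hh] at hP
      exact absurd hP.symm hh
  · exact singleton_subset_iff.2 (mem_verSpace_singleton.2 ⟨hz₀, hcons⟩)

lemma argminSet_decodingPref_of_subset_verSpace
    (hwd : ∀ z z', verSpace H {z} = verSpace H {z'} → decode z = decode z')
    (hmin : ∀ z, decode z₀ ∈ verSpace H {z} → verSpace H {z} ⊆ verSpace H {z₀} →
      verSpace H {z} = verSpace H {z₀}) {V : Finset (X → Bool)}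
    (hmem : decode z₀ ∈ V) (hV : V ⊆ verSpace H {z₀}) :
    argminSet (decodingPref H decode z₀) V (decode z₀) = {decode z₀} := by
  refine argminSet_indicatorPref_eq_singleton hmem (by simp [hV]) fun b hb hPb => ?_
  rw [if_pos rfl] at hPb
  rcases hPb with ⟨z, rfl, rfl, hne⟩ | ⟨rfl, -⟩
  · exact absurd (hwd _ _ (hmin z hmem hV)) hne
  · rfl

lemma Cand_decodingPref_of_ne
    (hwd : ∀ z z', verSpace H {z} = verSpace H {z'} → decode z = decode z')
    (hmin : ∀ z, decode z₀ ∈ verSpace H {z} → verSpace H {z} ⊆ verSpace H {z₀} →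
      verSpace H {z} = verSpace H {z₀}) (hcons : ∀ z, decode z z.1 = z.2) {z : X × Bool}
    (hz : decode z ∈ H) (hne : decode z ≠ decode z₀) :
    Cand (decodingPref H decode z₀) H (decode z₀) z = {decode z} := by
  refine argminSet_indicatorPref_eq_singleton (mem_verSpace_singleton.2 ⟨hz, hcons z⟩)
    (by rw [if_pos rfl]; exact Or.inl ⟨z, rfl, rfl, hne⟩) fun b hb hPb => ?_
  rw [if_pos rfl] at hPb
  rcases hPb with ⟨z', hV, rfl, -⟩ | ⟨rfl, hsub⟩
  · exact (hwd z z' hV).symm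
  · exact absurd (hwd _ _ (hmin z hb hsub)) hne

theorem collusionFree_decodingPref
    (hwd : ∀ z z', verSpace H {z} = verSpace H {z'} → decode z = decode z')
    (hmin : ∀ z, decode z₀ ∈ verSpace H {z} → verSpace H {z} ⊆ verSpace H {z₀} →
      verSpace H {z} = verSpace H {z₀})
    (hcons : decode z₀ z₀.1 = z₀.2) (hz₀ : decode z₀ ∈ H) :
    CollusionFree H (decodingPref H decode z₀) := by
  intro h _ H' _ hhat hargmin S hS
  have hmem : hhat ∈ verSpace H' S :=
    mem_verSpace.2 ⟨argminSet_subset _ _ _ (hargmin ▸ mem_singleton_self hhat), hS⟩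
  by_cases hhat₀ : hhat = decode z₀
  · subst hhat₀
    have hsub := subset_verSpace_of_argminSet_decodingPref_eq hcons hz₀ hargmin
    exact argminSet_decodingPref_of_subset_verSpace hwd hmin hmem ((verSpace_subset _ _).trans hsub)
  · exact argminSet_decodingPref_of_ne hhat₀ hmem

theorem TDpref_decodingPref_eq_one
    (hwd : ∀ z z', verSpace H {z} = verSpace H {z'} → decode z = decode z')
    (hmin : ∀ z, decode z₀ ∈ verSpace H {z} → verSpace H {z} ⊆ verSpace H {z₀} →
      verSpace H {z} = verSpace H {z₀}) (hcons : ∀ z, decode z z.1 = z.2)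
    (hsurj : ∀ g ∈ H, ∃ z, decode z = g) (hz₀ : decode z₀ ∈ H) :
    TDpref H (decode z₀) (decodingPref H decode z₀) = 1 := by
  refine TDpref_eq_one ⟨_, hz₀⟩ fun g hg => ?_
  obtain ⟨z, rfl⟩ := hsurj g hg
  by_cases hne : decode z = decode z₀
  · rw [hne]
    exact ⟨z₀, hcons z₀, argminSet_decodingPref_of_subset_verSpace hwd hmin
      (mem_verSpace_singleton.2 ⟨hz₀, hcons z₀⟩) subset_rfl⟩
  · exact ⟨z, hcons z, Cand_decodingPref_of_ne hwd hmin hcons hg hne⟩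

end Decoding

section NonClashing

variable [Fintype X]

def positives (h : X → Bool) : Finset X := univ.filter fun x => h x = true

variable {H : Finset (X → Bool)} {T : (X → Bool) → Finset X} {k : ℕ}

lemma nonClashing_positives (hk : ∀ h ∈ H, #(positives h) = k) : NonClashing H positives := by
  rintro h hh h' hh' hne ⟨hagree, -⟩
  have hsub : positives h ⊆ positives h' := fun x hx => by
    simp only [positives, mem_filter, mem_univ, true_and] at hx ⊢
    rw [hagree x (by simpa [positives] using hx), hx]
  have heq := eq_of_subset_of_card_le hsub (by rw [hk h hh, hk h' hh'])
  refine hne (funext fun x => Bool.eq_iff_iff.2 ?_)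
  simpa [positives] using congrArg (x ∈ ·) heq

lemma NCTD_le_of_card_positives (hk : ∀ h ∈ H, #(positives h) = k) : NCTD H ≤ k :=
  Nat.sInf_le ⟨positives, nonClashing_positives hk, fun h hh => (hk h hh).le⟩

lemma NonClashing.eq_of_agree (hT : NonClashing H T) {h h' : X → Bool} (hh : h ∈ H)
    (hh' : h' ∈ H) (h₁ : ∀ x ∈ T h, h' x = h x) (h₂ : ∀ x ∈ T h', h x = h' x) :
    h = h' := by
  by_contra hne
  exact hT h hh h' hh' hne ⟨h₁, h₂⟩

lemma NonClashing.card_le_of_eq_empty (hT : NonClashing H T) (hcard : ∀ h ∈ H, #(T h) ≤ 1)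
    {g : X → Bool} (hg : g ∈ H) (hTg : T g = ∅) : #H ≤ Fintype.card X + 1 := by
  have hsingle : ∀ h ∈ H.erase g, ∃ x, T h = {x} ∧ h x = !g x := by
    intro h hh
    obtain ⟨hhg, hh⟩ := mem_erase.1 hh
    have : ¬ ∀ x ∈ T h, g x = h x := fun hagree =>
      hT g hg h hh (Ne.symm hhg) ⟨by simp [hTg], hagree⟩
    push Not at this
    obtain ⟨x, hx, hgx⟩ := this
    refine ⟨x, eq_singleton_iff_unique_mem.2 ⟨hx, fun y hy => ?_⟩, Bool.eq_not.2 hgx.symm⟩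
    exact card_le_one.1 (hcard h hh) y hy x hx
  have hinj : Set.InjOn T (H.erase g) := by
    intro h hh h' hh' hTT
    obtain ⟨x, hx, hhx⟩ := hsingle h hh
    obtain ⟨x', hx', hhx'⟩ := hsingle h' hh'
    obtain rfl : x = x' := singleton_injective (hx.symm.trans (hTT.trans hx'))
    refine hT.eq_of_agree (mem_of_mem_erase hh) (mem_of_mem_erase hh') ?_ ?_ <;>
      simp [hx, hx', hhx, hhx']
  have hmaps : Set.MapsTo T (H.erase g) (univ.image singleton : Finset (Finset X)) := by
    intro h hh
    obtain ⟨x, hx, -⟩ := hsingle h hh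
    simp [hx]
  calc #H = #(H.erase g) + 1 := (card_erase_add_one hg).symm
    _ ≤ #(univ.image (singleton : X → Finset X)) + 1 :=
      Nat.add_le_add_right (card_le_card_of_injOn T hmaps hinj) 1
    _ ≤ Fintype.card X + 1 := Nat.add_le_add_right card_image_le 1

lemma NonClashing.exists_eq_singleton (hT : NonClashing H T) (hcard : ∀ h ∈ H, #(T h) ≤ 1)
    (hne : ∀ h ∈ H, (T h).Nonempty) (hH : #H = 2 * Fintype.card X) (z : X × Bool) :
    ∃ h ∈ H, T h = {z.1} ∧ h z.1 = z.2 := by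
  have hsingle : ∀ h ∈ H, ∃ x, T h = {x} := fun h hh =>
    card_eq_one.1 (le_antisymm (hcard h hh) (hne h hh).card_pos)
  have : Nonempty X := ⟨z.1⟩
  choose! c hc using hsingle
  have hinj : ∀ h h' (hh : h ∈ H) (hh' : h' ∈ H),
      (c h, h (c h)) = (c h', h' (c h')) → h = h' := by
    intro h h' hh hh' heq
    obtain ⟨hcc, hval⟩ := Prod.mk.inj heq
    refine hT.eq_of_agree hh hh' ?_ ?_ <;> simp [hc _ hh, hc _ hh', ← hcc, hval]
  obtain ⟨h, hh, hz⟩ := surj_on_of_inj_on_of_card_le (t := univ) (fun h _ => (c h, h (c h)))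
    (fun _ _ => mem_univ _) hinj (by simp [hH, mul_comm]) z (mem_univ z)
  exact ⟨h, hh, hz ▸ hc h hh, by rw [hz]⟩

lemma sum_card_positives_le {p q : X → X → Bool} (hp : ∀ x, p x x = true)
    (hq : ∀ a, q a a = false) (hpq : ∀ a x, q a x = true → p x a = true) :
    ∑ a, #(positives (q a)) ≤ ∑ x, (#(positives (p x)) - 1) :=
  calc ∑ a, #(positives (q a)) = ∑ x, #(univ.filter fun a => q a x = true) := by
        simp only [positives, card_filter]
        exact sum_comm
    _ ≤ ∑ x, #((positives (p x)).erase x) := sum_le_sum fun x _ => card_le_card fun a ha => by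
        have hqa : q a x = true := (mem_filter.1 ha).2
        refine mem_erase.2 ⟨fun hax => ?_, by simpa [positives] using hpq a x hqa⟩
        simp [hax, hq] at hqa
    _ = ∑ x, (#(positives (p x)) - 1) := by
        simp [card_erase_of_mem, positives, hp]

lemma NonClashing.eq_true_of_singleton (hT : NonClashing H T) {p q : X → Bool} (hp : p ∈ H)
    (hq : q ∈ H) {x a : X} (hpT : T p = {x}) (hpx : p x = true) (hqT : T q = {a})
    (hqa : q a = false) (hqx : q x = true) : p a = true := by
  by_contra hpa
  obtain rfl : p = q := hT.eq_of_agree hp hq (by simp [hpT, hqx, hpx]) (by simp_all)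
  obtain rfl : x = a := singleton_injective (hpT.symm.trans hqT)
  simp_all

theorem NonClashing.exists_one_lt_card (hT : NonClashing H T) (hn : 2 ≤ Fintype.card X)
    (hH : #H = 2 * Fintype.card X) (hk : ∀ h ∈ H, #(positives h) = k) :
    ∃ h ∈ H, 1 < #(T h) := by
  by_contra! hcard
  by_cases hempty : ∃ g ∈ H, T g = ∅
  · obtain ⟨g, hg, hTg⟩ := hempty
    have := hT.card_le_of_eq_empty hcard hg hTg
    omega
  push Not at hempty
  have hsurj := hT.exists_eq_singleton hcard hempty hH
  choose! p hpH hpT hpx using fun x : X => hsurj (x, true)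
  choose! q hqH hqT hqa using fun a : X => hsurj (a, false)
  have hcount := sum_card_positives_le hpx hqa fun a x =>
    hT.eq_true_of_singleton (hpH x) (hqH a) (hpT x) (hpx x) (hqT a) (hqa a)
  simp only [hk _ (hpH _), hk _ (hqH _), sum_const, card_univ, smul_eq_mul] at hcount
  obtain ⟨x⟩ : Nonempty X := Fintype.card_pos_iff.1 (by omega)
  have hk1 : 1 ≤ k := hk _ (hpH x) ▸ card_pos.2 ⟨x, by simp [positives, hpx]⟩
  have : Fintype.card X ≤ Fintype.card X * k := Nat.le_mul_of_pos_right _ hk1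
  rw [Nat.mul_sub_one] at hcount
  omega

theorem two_le_NCTD (hn : 2 ≤ Fintype.card X) (hH : #H = 2 * Fintype.card X)
    (hk : ∀ h ∈ H, #(positives h) = k) : 2 ≤ NCTD H :=
  le_csInf ⟨k, positives, nonClashing_positives hk, fun h hh => (hk h hh).le⟩
    fun m ⟨T, hT, hcard⟩ => by
      obtain ⟨h, hh, hlt⟩ := hT.exists_one_lt_card hn hH hk
      exact hlt.trans_le (hcard h hh)

end NonClashing

section Warmuth

def warmuthDecode : Fin 5 × Bool → Fin 5 → Bool
  | (x, true) => fun y => decide (y = x ∨ y = x + 1)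
  | (x, false) => fun y => decide (y = x - 1 ∨ y = x + 1)

lemma warmuthDecode_apply_self : ∀ z, warmuthDecode z z.1 = z.2 := by decide

lemma warmuthDecode_surjOn : ∀ g ∈ warmuthClass, ∃ z, warmuthDecode z = g := by decide

lemma warmuthDecode_zero_true_mem : warmuthDecode (0, true) ∈ warmuthClass := by decide

lemma verSpace_warmuthClass_injective :
    ∀ z z', verSpace warmuthClass {z} = verSpace warmuthClass {z'} → z = z' := by decide

lemma verSpace_warmuthClass_zero_true_minimal :
    ∀ z, warmuthDecode (0, true) ∈ verSpace warmuthClass {z} →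
      verSpace warmuthClass {z} ⊆ verSpace warmuthClass {(0, true)} →
      verSpace warmuthClass {z} = verSpace warmuthClass {(0, true)} := by decide

lemma card_warmuthClass : #warmuthClass = 2 * Fintype.card (Fin 5) := by decide

lemma card_positives_of_mem_warmuthClass : ∀ h ∈ warmuthClass, #(positives h) = 2 := by decide

lemma NCTD_warmuthClass : NCTD warmuthClass = 2 :=
  le_antisymm (NCTD_le_of_card_positives card_positives_of_mem_warmuthClass)
    (two_le_NCTD (by simp) card_warmuthClass card_positives_of_mem_warmuthClass)

end Warmuth

/-- for the Warmuth class there are an initial hypothesis and a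
collusion-free preference function with teaching dimension `1`; in particular
`Σ_lvs-TD = 1 < 2 = NCTD`. -/
theorem warmuth_lvs_one :
    ∃ h0 ∈ warmuthClass, ∃ σ : Pref (Fin 5),
      CollusionFree warmuthClass σ ∧
      TDpref warmuthClass h0 σ = 1 ∧
      famTD warmuthClass h0 (SigmaLVS warmuthClass) = 1 ∧
      NCTD warmuthClass = 2 := by
  have hwd : ∀ z z', verSpace warmuthClass {z} = verSpace warmuthClass {z'} →
      warmuthDecode z = warmuthDecode z' := fun z z' h =>
    congrArg warmuthDecode (verSpace_warmuthClass_injective z z' h)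
  have hcf := collusionFree_decodingPref hwd verSpace_warmuthClass_zero_true_minimal
    (warmuthDecode_apply_self _) warmuthDecode_zero_true_mem
  have hTD := TDpref_decodingPref_eq_one hwd verSpace_warmuthClass_zero_true_minimal
    warmuthDecode_apply_self warmuthDecode_surjOn warmuthDecode_zero_true_mem
  exact ⟨_, warmuthDecode_zero_true_mem, _, hcf, hTD,
    famTD_eq_one hcf hTD ⟨_, warmuthDecode_zero_true_mem⟩, NCTD_warmuthClass⟩
end

section
/- For every finite instance set X, every finite hypothesis class H of functions X → Bool with |H| ≥ 2, and every initial hypothesis h0 ∈ H, there exists a collusion-free preference function σ_lvs that simultaneously satisfies the win-stay property (for every h ∈ H and every H' ⊆ H with h ∈ H', argmin_{h' ∈ H'} σ_lvs(h'; H', h) = {h}) and TD_{X,H,h0}(σ_lvs) ≤ VCD(H, X). -/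
open scoped Classical

variable {X : Type}

/-!
A win-stay learner keeps its hypothesis while it is consistent, which makes it collusion-free;
once its hypothesis is refuted it jumps to `pick H'`, a function of the version space alone. To
teach `t ≠ h0`, the teacher shows a sample on which `t` agrees with `h0` except at one point,
shown last: the learner stays at `h0` until the final example and then jumps to `t`, provided
`pick` inverts the map from targets to their final version spaces. So it suffices that these
samples have at most `VCD` points and pairwise distinct version spaces.

Such samples are built by induction on the instance set, as in the proof of the Sauer–Shelah
lemma: forgetting a point `x` leaves a class of no larger VC dimension, while the projections both
of whose extensions at `x` are present form a class of VC dimension one less; hypotheses of the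
second kind are taught with `x` added to their sample.
-/

open Function

noncomputable def agreeOn (C : Finset (X → Bool)) (t : X → Bool) (S : Finset X) :
    Finset (X → Bool) :=
  C.filter fun A => ∀ y ∈ S, A y = t y

theorem mem_agreeOn {C : Finset (X → Bool)} {t A : X → Bool} {S : Finset X} :
    A ∈ agreeOn C t S ↔ A ∈ C ∧ ∀ y ∈ S, A y = t y :=
  Finset.mem_filter

theorem verSpace_singleton_eq_agreeOn (C : Finset (X → Bool)) (t : X → Bool) (y : X) :
    verSpace C {(y, t y)} = agreeOn C t {y} := by
  ext A
  simp [verSpace, agreeOn]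

theorem agreeOn_agreeOn (C : Finset (X → Bool)) (t : X → Bool) (S T : Finset X) :
    agreeOn (agreeOn C t S) t T = agreeOn C t (S ∪ T) := by
  ext A
  simp only [mem_agreeOn, Finset.mem_union]
  grind

theorem argminSet_eq_singleton {σ : Pref X} {H' : Finset (X → Bool)} {h a : X → Bool}
    (ha : a ∈ H') (hlt : ∀ b ∈ H', b ≠ a → σ a H' h < σ b H' h) :
    argminSet σ H' h = {a} := by
  ext b
  simp only [argminSet, Finset.mem_filter, Finset.mem_singleton]
  constructor
  · rintro ⟨hb, hmin⟩
    by_contra hne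
    exact (hmin a ha).not_gt (hlt b hb hne)
  · rintro rfl
    refine ⟨ha, fun c hc => ?_⟩
    rcases eq_or_ne c b with rfl | hne
    · exact le_rfl
    · exact (hlt c hc hne).le

theorem collusionFree_of_winStay {σ : Pref X} (Hc : Finset (X → Bool))
    (hws : ∀ H' h, h ∈ H' → argminSet σ H' h = {h}) : CollusionFree Hc σ := by
  intro h _ H' _ hhat hmin S hS
  have hhat_mem : hhat ∈ H' := Finset.filter_subset _ _ (hmin ▸ Finset.mem_singleton_self hhat)
  exact hws _ _ (Finset.mem_filter.2 ⟨hhat_mem, hS⟩)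

/-- The teacher first shows the points of `Q`, on which the target `t` agrees with `h₀`, so the
win-stay learner stays at `h₀`; the final example at `j` then makes it jump to `t`. -/
theorem dle_of_stall_then_jump {σ : Pref X} {h₀ t : X → Bool} {j : X}
    (hws : ∀ H', h₀ ∈ H' → argminSet σ H' h₀ = {h₀}) (Q : Finset X) :
    ∀ V : Finset (X → Bool), h₀ ∈ V → (∀ y ∈ Q, t y = h₀ y) →
      argminSet σ (agreeOn V t (insert j Q)) h₀ = {t} → Dle σ (Q.card + 1) V h₀ t := by
  induction Q using Finset.induction_on with
  | empty =>
    intro V _ _ hjump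
    exact Or.inl ⟨(j, t j), rfl, by rwa [Cand, verSpace_singleton_eq_agreeOn]⟩
  | insert y Q hy ih =>
    intro V hV hQ hjump
    rw [Finset.card_insert_of_notMem hy]
    have hstay : h₀ ∈ verSpace V {(y, t y)} := by
      rw [verSpace_singleton_eq_agreeOn, mem_agreeOn]
      simpa using ⟨hV, (hQ y (Finset.mem_insert_self y Q)).symm⟩
    refine Or.inr ⟨(y, t y), rfl, ?_⟩
    rw [Cand, hws _ hstay]
    intro h hh
    rw [Finset.mem_singleton.1 hh]
    refine ih _ hstay (fun z hz => hQ z (Finset.mem_insert_of_mem hz)) ?_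
    rwa [verSpace_singleton_eq_agreeOn, agreeOn_agreeOn, Finset.singleton_union,
      Finset.insert_comm]

theorem dval_le_of_dle {σ : Pref X} {H' : Finset (X → Bool)} {h t : X → Bool} {n : ℕ}
    (hn : Dle σ n H' h t) : Dval σ H' h t ≤ n :=
  sInf_le ⟨n, rfl, hn⟩

noncomputable def winStayPref (pick : Finset (X → Bool) → X → Bool) : Pref X :=
  fun h' H' h => if h' = h then 0 else if h' = pick H' then 1 else 2

theorem argminSet_winStayPref_of_mem (pick : Finset (X → Bool) → X → Bool)
    (H' : Finset (X → Bool)) (h : X → Bool) (hh : h ∈ H') :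
    argminSet (winStayPref pick) H' h = {h} :=
  argminSet_eq_singleton hh fun b _ hb => by
    simp only [winStayPref, if_neg hb]
    split_ifs <;> norm_num

theorem argminSet_winStayPref_of_notMem (pick : Finset (X → Bool) → X → Bool)
    {H' : Finset (X → Bool)} {h : X → Bool} (hh : h ∉ H') (hpick : pick H' ∈ H') :
    argminSet (winStayPref pick) H' h = {pick H'} :=
  argminSet_eq_singleton hpick fun b hb hne => by
    have hph : pick H' ≠ h := fun e => hh (e ▸ hpick)
    have hbh : b ≠ h := fun e => hh (e ▸ hb)
    simp only [winStayPref, if_neg hph, if_neg hbh, if_neg hne]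
    norm_num

def FixedOutside (U : Finset (X → Bool)) (Y : Finset X) : Prop :=
  ∀ A ∈ U, ∀ B ∈ U, ∀ z ∉ Y, A z = B z

def VCBound (U : Finset (X → Bool)) (Y : Finset X) (e : ℕ) : Prop :=
  ∀ S ⊆ Y, Shatters U S → S.card ≤ e

theorem FixedOutside.eq_of_empty {U : Finset (X → Bool)} (hU : FixedOutside U ∅)
    {A B : X → Bool} (hA : A ∈ U) (hB : B ∈ U) : A = B :=
  funext fun z => hU A hA B hB z (Finset.notMem_empty z)

theorem FixedOutside.mono {U V : Finset (X → Bool)} {Y : Finset X} (hV : FixedOutside V Y)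
    (hUV : U ⊆ V) : FixedOutside U Y :=
  fun A hA B hB => hV A (hUV hA) B (hUV hB)

theorem shatters_singleton_of_ne {U : Finset (X → Bool)} {A B : X → Bool} {x : X}
    (hA : A ∈ U) (hB : B ∈ U) (hAB : A x ≠ B x) : Shatters U {x} := by
  intro b
  by_cases hb : A x = b x
  · exact ⟨A, hA, by simpa using hb⟩
  · refine ⟨B, hB, ?_⟩
    simp only [Finset.mem_singleton, forall_eq]
    rw [Bool.eq_not_of_ne (Ne.symm hAB), Bool.eq_not_of_ne (Ne.symm hb)]

theorem exists_shatters_singleton {U : Finset (X → Bool)} (hU : 2 ≤ U.card) :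
    ∃ x, Shatters U {x} := by
  obtain ⟨A, hA, B, hB, hAB⟩ := Finset.one_lt_card.1 hU
  obtain ⟨x, hx⟩ := Function.ne_iff.1 hAB
  exact ⟨x, shatters_singleton_of_ne hA hB hx⟩

theorem card_le_VCD_of_shatters [Fintype X] {U : Finset (X → Bool)} {S : Finset X}
    (hS : Shatters U S) : S.card ≤ VCD U :=
  le_csSup ⟨Fintype.card X, by rintro k ⟨S', rfl, -⟩; exact S'.card_le_univ⟩ ⟨S, rfl, hS⟩

section Projection

variable (x : X)

noncomputable def proj (U : Finset (X → Bool)) : Finset (X → Bool) :=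
  U.image (update · x false)

noncomputable def doubled (U : Finset (X → Bool)) : Finset (X → Bool) :=
  (proj x U).filter fun B => ∀ v, update B x v ∈ U

def Flippable (U : Finset (X → Bool)) (c : Bool) (A : X → Bool) : Prop :=
  A x = c ∧ update A x (!c) ∈ U

variable {x}

theorem update_mem_proj {U : Finset (X → Bool)} {A : X → Bool} (hA : A ∈ U) :
    update A x false ∈ proj x U :=
  Finset.mem_image_of_mem _ hA

theorem doubled_subset_proj (U : Finset (X → Bool)) : doubled x U ⊆ proj x U :=
  Finset.filter_subset _ _

theorem update_mem_of_mem_doubled {U : Finset (X → Bool)} {B : X → Bool}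
    (hB : B ∈ doubled x U) (v : Bool) : update B x v ∈ U :=
  (Finset.mem_filter.1 hB).2 v

theorem update_false_apply_of_notMem {Y : Finset X} (hx : x ∉ Y) (A : X → Bool) {y : X}
    (hy : y ∈ Y) : update A x false y = A y :=
  update_of_ne (ne_of_mem_of_not_mem hy hx) _ _

theorem update_update_false_self (A : X → Bool) : update (update A x false) x (A x) = A := by
  rw [update_idem, update_eq_self]

theorem eq_of_update_false_eq {A₁ A₂ : X → Bool}
    (h : update A₁ x false = update A₂ x false) (hx : A₁ x = A₂ x) : A₁ = A₂ := by
  rw [← update_update_false_self A₁, h, hx, update_update_false_self]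

theorem flippable_of_update_false_eq {U : Finset (X → Bool)} {A B : X → Bool} (hB : B ∈ U)
    (h : update A x false = update B x false) (hx : A x ≠ B x) : Flippable x U (A x) A := by
  refine ⟨rfl, ?_⟩
  rwa [← Bool.eq_not_of_ne hx.symm, ← update_idem false, h, update_update_false_self]

theorem Flippable.update_false_mem_doubled {U : Finset (X → Bool)} {c : Bool} {A : X → Bool}
    (hA : A ∈ U) (hf : Flippable x U c A) : update A x false ∈ doubled x U := by
  refine Finset.mem_filter.2 ⟨update_mem_proj hA, fun v => ?_⟩
  rw [update_idem]
  rcases eq_or_ne v (A x) with rfl | hv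
  · rwa [update_eq_self]
  · rw [Bool.eq_not_of_ne hv, hf.1]
    exact hf.2

theorem FixedOutside.proj {U : Finset (X → Bool)} {Y : Finset X}
    (hU : FixedOutside U (insert x Y)) : FixedOutside (_root_.proj x U) Y := by
  simp only [FixedOutside, _root_.proj, Finset.mem_image]
  rintro _ ⟨A, hA, rfl⟩ _ ⟨B, hB, rfl⟩ z hz
  rcases eq_or_ne z x with rfl | hzx
  · simp
  · rw [update_of_ne hzx, update_of_ne hzx]
    exact hU A hA B hB z (by simp [hz, hzx])

theorem Shatters.of_proj {U : Finset (X → Bool)} {S : Finset X} (hx : x ∉ S)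
    (hS : Shatters (proj x U) S) : Shatters U S := by
  intro b
  obtain ⟨_, hB, hBb⟩ := hS b
  obtain ⟨A, hA, rfl⟩ := Finset.mem_image.1 hB
  exact ⟨A, hA, fun y hy => (update_false_apply_of_notMem hx A hy).symm.trans (hBb y hy)⟩

theorem Shatters.insert_of_doubled {U : Finset (X → Bool)} {S : Finset X} (hx : x ∉ S)
    (hS : Shatters (doubled x U) S) : Shatters U (insert x S) := by
  intro b
  obtain ⟨B, hB, hBb⟩ := hS b
  refine ⟨update B x (b x), update_mem_of_mem_doubled hB _, ?_⟩
  rw [Finset.forall_mem_insert, update_self]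
  exact ⟨rfl, fun y hy => (update_of_ne (ne_of_mem_of_not_mem hy hx) _ _).trans (hBb y hy)⟩

theorem VCBound.proj {U : Finset (X → Bool)} {Y : Finset X} {e : ℕ} (hx : x ∉ Y)
    (hU : VCBound U (insert x Y) e) : VCBound (_root_.proj x U) Y e :=
  fun S hSY hS => hU S (hSY.trans (Finset.subset_insert x Y)) (hS.of_proj fun h => hx (hSY h))

theorem VCBound.doubled {U : Finset (X → Bool)} {Y : Finset X} {e : ℕ} (hx : x ∉ Y)
    (hU : VCBound U (insert x Y) e) : VCBound (_root_.doubled x U) Y (e - 1) := by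
  intro S hSY hS
  have hxS : x ∉ S := fun h => hx (hSY h)
  have := hU _ (Finset.insert_subset_insert x hSY) (hS.insert_of_doubled hxS)
  rw [Finset.card_insert_of_notMem hxS] at this
  omega

theorem VCBound.one_le_of_mem_doubled {U : Finset (X → Bool)} {Y : Finset X} {e : ℕ}
    (hU : VCBound U (insert x Y) e) {B : X → Bool} (hB : B ∈ _root_.doubled x U) : 1 ≤ e :=
  hU {x} (by simp) (shatters_singleton_of_ne (update_mem_of_mem_doubled hB true)
    (update_mem_of_mem_doubled hB false) (by simp))

theorem agreeOn_proj {U : Finset (X → Bool)} (A : X → Bool) {Q : Finset X} (hx : x ∉ Q) :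
    agreeOn (proj x U) (update A x false) Q = (agreeOn U A Q).image (update · x false) := by
  ext B
  simp only [mem_agreeOn, proj, Finset.mem_image]
  constructor
  · rintro ⟨⟨A', hA', rfl⟩, hagree⟩
    refine ⟨A', ⟨hA', fun y hy => ?_⟩, rfl⟩
    simpa only [update_false_apply_of_notMem hx _ hy] using hagree y hy
  · rintro ⟨A', ⟨hA', hagree⟩, rfl⟩
    exact ⟨⟨A', hA', rfl⟩, fun y hy => by
      simpa only [update_false_apply_of_notMem hx _ hy] using hagree y hy⟩

theorem agreeOn_doubled {U : Finset (X → Bool)} {c : Bool} {A : X → Bool} (hAx : A x = c)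
    {Q : Finset X} (hx : x ∉ Q) :
    agreeOn (doubled x U) (update A x false) Q =
      (doubled x U).filter fun B => update B x c ∈ agreeOn U A (insert x Q) := by
  ext B
  simp only [mem_agreeOn, Finset.mem_filter, Finset.forall_mem_insert, update_self]
  refine and_congr_right fun hB => ?_
  simp only [update_mem_of_mem_doubled hB, hAx, true_and]
  refine forall₂_congr fun y hy => ?_
  simp only [update_of_ne (ne_of_mem_of_not_mem hy hx)]

theorem agreeOn_ne_of_flippable {U : Finset (X → Bool)} {c : Bool} {A A' : X → Bool}
    (hA : A ∈ U) (hf : Flippable x U c A) {Q Q' : Finset X} (hx : x ∉ Q') :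
    agreeOn U A' Q' ≠ agreeOn U A (insert x Q) := by
  intro h
  have hA' : A ∈ agreeOn U A' Q' := h ▸ mem_agreeOn.2 ⟨hA, fun _ _ => rfl⟩
  have hflip : update A x (!c) ∈ agreeOn U A' Q' := by
    refine mem_agreeOn.2 ⟨hf.2, fun y hy => ?_⟩
    rw [update_of_ne (ne_of_mem_of_not_mem hy hx)]
    exact (mem_agreeOn.1 hA').2 y hy
  rw [h, mem_agreeOn, Finset.forall_mem_insert, update_self, hf.1] at hflip
  exact Bool.not_ne_self c hflip.2.1

theorem eq_of_update_false_eq_of_not_flippable {U : Finset (X → Bool)} {c : Bool}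
    {A₁ A₂ : X → Bool} (hA₁ : A₁ ∈ U) (hA₂ : A₂ ∈ U) (hf₁ : ¬Flippable x U c A₁)
    (hf₂ : ¬Flippable x U c A₂) (h : update A₁ x false = update A₂ x false) : A₁ = A₂ := by
  by_contra hne
  have hx : A₁ x ≠ A₂ x := fun hx => hne (eq_of_update_false_eq h hx)
  rcases eq_or_ne (A₁ x) c with h₁ | h₁
  · exact hf₁ (h₁ ▸ flippable_of_update_false_eq hA₂ h hx)
  · rcases eq_or_ne (A₂ x) c with h₂ | h₂
    · exact hf₂ (h₂ ▸ flippable_of_update_false_eq hA₁ h.symm hx.symm)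
    · exact hx ((Bool.eq_not_of_ne h₁).trans (Bool.eq_not_of_ne h₂).symm)

theorem injOn_agreeOn_of_proj_doubled {U : Finset (X → Bool)} {c : Bool}
    {s s₁ : Set (X → Bool)} (hsU : s ⊆ U) {P₁ P₂ : (X → Bool) → Finset X}
    (hs₁ : ∀ A ∈ s, ¬Flippable x U c A → update A x false ∈ s₁)
    (hP₁ : ∀ B ∈ s₁, x ∉ P₁ B) (hP₂ : ∀ B ∈ doubled x U, x ∉ P₂ B)
    (hinj₁ : Set.InjOn (fun B => agreeOn (proj x U) B (P₁ B)) s₁)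
    (hinj₂ : Set.InjOn (fun B => agreeOn (doubled x U) B (P₂ B)) (doubled x U)) :
    Set.InjOn (fun A => agreeOn U A (if Flippable x U c A then insert x (P₂ (update A x false))
      else P₁ (update A x false))) s := by
  intro A₁ hA₁ A₂ hA₂ h
  by_cases hf₁ : Flippable x U c A₁ <;> by_cases hf₂ : Flippable x U c A₂ <;>
    simp only [hf₁, hf₂, if_true, if_false] at h
  · have hd₁ := hf₁.update_false_mem_doubled (hsU hA₁)
    have hd₂ := hf₂.update_false_mem_doubled (hsU hA₂)
    refine eq_of_update_false_eq (hinj₂ hd₁ hd₂ ?_) (hf₁.1.trans hf₂.1.symm)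
    simp only [agreeOn_doubled hf₁.1 (hP₂ _ hd₁), agreeOn_doubled hf₂.1 (hP₂ _ hd₂), h]
  · exact absurd h.symm (agreeOn_ne_of_flippable (hsU hA₁) hf₁ (hP₁ _ (hs₁ A₂ hA₂ hf₂)))
  · exact absurd h (agreeOn_ne_of_flippable (hsU hA₂) hf₂ (hP₁ _ (hs₁ A₁ hA₁ hf₁)))
  · have hs₁₁ := hs₁ A₁ hA₁ hf₁
    have hs₁₂ := hs₁ A₂ hA₂ hf₂
    refine eq_of_update_false_eq_of_not_flippable (hsU hA₁) (hsU hA₂) hf₁ hf₂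
      (hinj₁ hs₁₁ hs₁₂ ?_)
    simp only [agreeOn_proj A₁ (hP₁ _ hs₁₁), agreeOn_proj A₂ (hP₁ _ hs₁₂), h]

theorem exists_injOn_agreeOn_of_labels (ρ : X → Bool) (Y : Finset X) :
    ∀ (U : Finset (X → Bool)) (e : ℕ), FixedOutside U Y → VCBound U Y e →
      ∃ P : (X → Bool) → Finset X,
        (∀ B ∈ U, P B ⊆ Y ∧ (P B).card ≤ e ∧ ∀ y ∈ P B, B y = ρ y) ∧
        Set.InjOn (fun B => agreeOn U B (P B)) U := by
  induction Y using Finset.induction_on with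
  | empty =>
    intro U e hU _
    exact ⟨fun _ => ∅, fun _ _ => by simp, fun A hA B hB _ => hU.eq_of_empty hA hB⟩
  | insert x Y hx ih =>
    intro U e hU hvc
    obtain ⟨P₁, hP₁, hinj₁⟩ := ih (proj x U) e hU.proj (hvc.proj hx)
    obtain ⟨P₂, hP₂, hinj₂⟩ :=
      ih (doubled x U) (e - 1) (hU.proj.mono (doubled_subset_proj U)) (hvc.doubled hx)
    refine ⟨fun A => if Flippable x U (ρ x) A then insert x (P₂ (update A x false))
      else P₁ (update A x false), fun A hA => ?_,
      injOn_agreeOn_of_proj_doubled subset_rfl (fun A hA _ => update_mem_proj hA)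
        (fun B hB h => hx ((hP₁ B hB).1 h)) (fun B hB h => hx ((hP₂ B hB).1 h)) hinj₁ hinj₂⟩
    dsimp only
    split_ifs with hf
    · have hd := hf.update_false_mem_doubled hA
      obtain ⟨hsub, hcard, hlab⟩ := hP₂ _ hd
      refine ⟨Finset.insert_subset_insert x hsub,
        (Finset.card_insert_le _ _).trans (by have := hvc.one_le_of_mem_doubled hd; omega), ?_⟩
      rw [Finset.forall_mem_insert]
      exact ⟨hf.1, fun y hy => by
        rw [← hlab y hy, update_false_apply_of_notMem hx A (hsub hy)]⟩
    · obtain ⟨hsub, hcard, hlab⟩ := hP₁ _ (update_mem_proj hA)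
      exact ⟨hsub.trans (Finset.subset_insert x Y), hcard, fun y hy => by
        rw [← hlab y hy, update_false_apply_of_notMem hx A (hsub hy)]⟩

theorem exists_injOn_agreeOn_of_one_disagreement (Y : Finset X) :
    ∀ (C : Finset (X → Bool)) (ρ : X → Bool) (d : ℕ), ρ ∈ C → FixedOutside C Y →
      VCBound C Y d → ∃ S : (X → Bool) → Finset X,
        (∀ t ∈ C, t ≠ ρ → S t ⊆ Y ∧ (S t).card ≤ d ∧
          ∃ j ∈ S t, t j ≠ ρ j ∧ ∀ y ∈ S t, y ≠ j → t y = ρ y) ∧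
        Set.InjOn (fun t => agreeOn C t (S t)) {t | t ∈ C ∧ t ≠ ρ} := by
  induction Y using Finset.induction_on with
  | empty =>
    intro C ρ d hρ hC _
    refine ⟨fun _ => ∅, fun t ht htρ => absurd (hC.eq_of_empty ht hρ) htρ, ?_⟩
    rintro t ⟨ht, htρ⟩
    exact absurd (hC.eq_of_empty ht hρ) htρ
  | insert x Y hx ih =>
    intro C ρ d hρ hC hvc
    obtain ⟨S₁, hS₁, hinj₁⟩ :=
      ih (proj x C) (update ρ x false) d (update_mem_proj hρ) hC.proj (hvc.proj hx)
    obtain ⟨S₂, hS₂, hinj₂⟩ := exists_injOn_agreeOn_of_labels ρ Y (doubled x C) (d - 1)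
      (hC.proj.mono (doubled_subset_proj C)) (hvc.doubled hx)
    have hproj_ne : ∀ t ∈ C, t ≠ ρ → ¬Flippable x C (!ρ x) t →
        update t x false ≠ update ρ x false := by
      intro t ht htρ hf h
      have htx : t x ≠ ρ x := fun e => htρ (eq_of_update_false_eq h e)
      exact hf (Bool.eq_not_of_ne htx ▸ flippable_of_update_false_eq hρ h htx)
    refine ⟨fun t => if Flippable x C (!ρ x) t then insert x (S₂ (update t x false))
      else S₁ (update t x false), fun t ht htρ => ?_,
      injOn_agreeOn_of_proj_doubled (s := {t | t ∈ C ∧ t ≠ ρ})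
        (s₁ := {B | B ∈ proj x C ∧ B ≠ update ρ x false}) (fun t ht => Finset.mem_coe.2 ht.1)
        (fun t ht hf => ⟨update_mem_proj ht.1, hproj_ne t ht.1 ht.2 hf⟩)
        (fun B hB h => hx ((hS₁ B hB.1 hB.2).1 h)) (fun B hB h => hx ((hS₂ B hB).1 h))
        hinj₁ hinj₂⟩
    dsimp only
    split_ifs with hf
    · have hd := hf.update_false_mem_doubled ht
      obtain ⟨hsub, hcard, hlab⟩ := hS₂ _ hd
      refine ⟨Finset.insert_subset_insert x hsub,
        (Finset.card_insert_le _ _).trans (by have := hvc.one_le_of_mem_doubled hd; omega),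
        x, Finset.mem_insert_self x _, by simp [hf.1], fun y hy hyx => ?_⟩
      have hy' := (Finset.mem_insert.1 hy).resolve_left hyx
      rw [← hlab y hy', update_false_apply_of_notMem hx t (hsub hy')]
    · obtain ⟨hsub, hcard, j, hj, hjt, hagree⟩ := hS₁ _ (update_mem_proj ht) (hproj_ne t ht htρ hf)
      have hproj : ∀ {y}, y ∈ S₁ (update t x false) → ∀ A : X → Bool,
          update A x false y = A y :=
        fun hy A => update_false_apply_of_notMem hx A (hsub hy)
      refine ⟨hsub.trans (Finset.subset_insert x Y), hcard, j, hj, ?_, fun y hy hyj => ?_⟩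
      · rwa [hproj hj, hproj hj] at hjt
      · simpa only [hproj hy] using hagree y hy hyj

end Projection

/-- there is a collusion-free preference function which satisfies the
win-stay property and has teaching dimension at most `VCD(H, X)`. -/
theorem winStay_VCD (X : Type) [Fintype X] (Hc : Finset (X → Bool))
    (hcard : 2 ≤ Hc.card) (h0 : X → Bool) (h0mem : h0 ∈ Hc) :
    ∃ σ : Pref X, CollusionFree Hc σ ∧
      (∀ h ∈ Hc, ∀ H' ⊆ Hc, h ∈ H' → argminSet σ H' h = {h}) ∧
      TDpref Hc h0 σ ≤ (VCD Hc : ℕ∞) := by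
  obtain ⟨S, hS, hinj⟩ := exists_injOn_agreeOn_of_one_disagreement Finset.univ Hc h0 (VCD Hc)
    h0mem (fun _ _ _ _ z hz => absurd (Finset.mem_univ z) hz)
    (fun _ _ hS => card_le_VCD_of_shatters hS)
  set pick := invFunOn (fun t => agreeOn Hc t (S t)) {t | t ∈ Hc ∧ t ≠ h0}
  have hws := argminSet_winStayPref_of_mem pick
  refine ⟨winStayPref pick, collusionFree_of_winStay Hc hws, fun h _ H' _ => hws H' h,
    iSup₂_le fun t ht => ?_⟩
  rcases eq_or_ne t h0 with rfl | htne
  · obtain ⟨x, hx⟩ := exists_shatters_singleton hcard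
    have hteach := dle_of_stall_then_jump (j := x) (hws · t) ∅ Hc ht (by simp)
      (hws _ _ (mem_agreeOn.2 ⟨ht, fun _ _ => rfl⟩))
    exact (dval_le_of_dle hteach).trans (by exact_mod_cast card_le_VCD_of_shatters hx)
  · obtain ⟨-, hcardS, j, hj, hjt, hagree⟩ := hS t ht htne
    have hpick : pick (agreeOn Hc t (S t)) = t := hinj.leftInvOn_invFunOn ⟨ht, htne⟩
    have hh0 : h0 ∉ agreeOn Hc t (S t) := fun h => hjt ((mem_agreeOn.1 h).2 j hj).symm
    have hpick_mem : pick (agreeOn Hc t (S t)) ∈ agreeOn Hc t (S t) := by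
      rw [hpick]
      exact mem_agreeOn.2 ⟨ht, fun _ _ => rfl⟩
    have hjump : argminSet (winStayPref pick) (agreeOn Hc t (S t)) h0 = {t} := by
      simpa only [hpick] using argminSet_winStayPref_of_notMem pick hh0 hpick_mem
    have hteach := dle_of_stall_then_jump (hws · h0) _ Hc h0mem
      (fun y hy => hagree y (Finset.mem_of_mem_erase hy) (Finset.ne_of_mem_erase hy))
      (by rwa [Finset.insert_erase hj])
    rw [Finset.card_erase_add_one hj] at hteach
    exact (dval_le_of_dle hteach).trans (by exact_mod_cast hcardS)
end
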